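/- arXiv:2410.17895 — 5 statements merged into one kernel-verified Lean document; each statement's English description precedes it below -/
import Mathlib

section
/- Fixed Point Theorem (Smullyan's Theorem F): Let M be an r-Smullyan model. Then every M-predicate H has an M-fixed point; in fact the sentence rHrH is an M-fixed point of H. -/
/-! By prefix-freeness a sentence determines its predicate, so `M ⊨ HX` iff `X ∈ Φ(H)`.
Hence for every predicate `K`, `M ⊨ rHK` iff `M ⊨ H(KK)`; taking `K = rH` makes `rHrH` a
fixed point of `H`. -/

/-- A Smullyan model over a set of symbols `α`: a set `pred` of predicates
(finite strings over `α`) satisfying the prefix-freeness requirement (†), together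
with a naming function `phi` assigning a set of strings to each string
(only its values on `pred` are relevant). -/
structure SmullyanModel (α : Type) where
  pred : Set (List α)
  prefixFree : ∀ H ∈ pred, ∀ X : List α, X ≠ [] → H ++ X ∉ pred
  phi : List α → Set (List α)

namespace SmullyanModel

variable {α : Type} (M : SmullyanModel α)

/-- The set of `M`-sentences: strings of the form `H ++ X` with `H` a predicate. -/
def sent : Set (List α) := {S | ∃ H ∈ M.pred, ∃ X : List α, S = H ++ X}

/-- `Sent_M^+ = Sent_M \ Pred_M`. -/
def sentPlus : Set (List α) := M.sent \ M.pred

/-- `True_M`: the set of true `M`-sentences. -/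
def trueSet : Set (List α) := {S | ∃ H ∈ M.pred, ∃ X ∈ M.phi H, S = H ++ X}

/-- `True_M^+ = True_M \ Pred_M`. -/
def truePlus : Set (List α) := M.trueSet \ M.pred

/-- `False_M = Sent_M \ True_M`. -/
def falseSet : Set (List α) := M.sent \ M.trueSet

/-- `False_M^+ = Sent_M^+ \ True_M^+`. -/
def falsePlus : Set (List α) := M.sentPlus \ M.truePlus

/-- `M ⊨ S`. -/
def Sat (S : List α) : Prop := S ∈ M.trueSet

/-- `S ∈ Sent_M^+` is an `M`-fixed point of `H` if `M ⊨ S ↔ M ⊨ HS`. -/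
def IsFixedPoint (H S : List α) : Prop :=
  S ∈ M.sentPlus ∧ (M.Sat S ↔ M.Sat (H ++ S))

/-- `M` is an `n`-Smullyan model (with negation symbol `n : α`):
for every predicate `H`, `nH` is a predicate and `Φ(nH) = Σ* \ Φ(H)`. -/
def IsNModel (n : α) : Prop :=
  ∀ H ∈ M.pred, (n :: H) ∈ M.pred ∧ M.phi (n :: H) = {X : List α | X ∉ M.phi H}

/-- `M` is an `r`-Smullyan model (with repeat symbol `r : α`):
for every predicate `H`, `rH` is a predicate and `Φ(rH) = {K ∈ Pred : KK ∈ Φ(H)}`. -/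
def IsRModel (r : α) : Prop :=
  ∀ H ∈ M.pred, (r :: H) ∈ M.pred ∧
    M.phi (r :: H) = {K : List α | K ∈ M.pred ∧ K ++ K ∈ M.phi H}

/-- FPT: every `M`-predicate has an `M`-fixed point. -/
def FPT : Prop := ∀ H ∈ M.pred, ∃ S : List α, M.IsFixedPoint H S

/-- T-Tarski: no `M`-predicate names `True_M`. -/
def TTarski : Prop := ¬ ∃ H ∈ M.pred, M.phi H = M.trueSet

/-- F-Tarski: no `M`-predicate names `False_M`. -/
def FTarski : Prop := ¬ ∃ H ∈ M.pred, M.phi H = M.falseSet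

/-- T-Tarski⁺: there is no `M`-predicate `H` with `True_M⁺ = Φ(H) ∩ Sent_M⁺`. -/
def TTarskiPlus : Prop := ¬ ∃ H ∈ M.pred, M.truePlus = M.phi H ∩ M.sentPlus

/-- F-Tarski⁺: there is no `M`-predicate `H` with `False_M⁺ = Φ(H) ∩ Sent_M⁺`. -/
def FTarskiPlus : Prop := ¬ ∃ H ∈ M.pred, M.falsePlus = M.phi H ∩ M.sentPlus

/-- mG1. -/
def MG1 : Prop :=
  ∀ H ∈ M.pred, M.phi H ⊆ M.trueSet →
    ∃ S ∈ M.sent, M.Sat S ∧ S ∉ M.phi H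

/-- mG1⁺. -/
def MG1Plus : Prop :=
  ∀ H ∈ M.pred, M.phi H ∩ M.sentPlus ⊆ M.truePlus →
    ∃ S ∈ M.sentPlus, M.Sat S ∧ S ∉ M.phi H

/-- G1 (for `n`-Smullyan models). -/
def G1 (n : α) : Prop :=
  ∀ H ∈ M.pred, M.phi H ⊆ M.trueSet →
    ∃ S ∈ M.sent, S ∉ M.phi H ∧ (n :: S) ∉ M.phi H

/-- G1⁺ (for `n`-Smullyan models). -/
def G1Plus (n : α) : Prop :=
  ∀ H ∈ M.pred, M.phi H ∩ M.sentPlus ⊆ M.truePlus →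
    ∃ S ∈ M.sentPlus, S ∉ M.phi H ∧ (n :: S) ∉ M.phi H

/-- The predicate set of a simple model: strings `X♯` where `X` contains no `♯`. -/
def simplePred (sharp : α) : Set (List α) :=
  {L | ∃ X : List α, sharp ∉ X ∧ L = X ++ [sharp]}

end SmullyanModel

namespace SmullyanModel

variable {α : Type} (M : SmullyanModel α)

theorem eq_nil_of_append_mem_pred {G X : List α} (hG : G ∈ M.pred) (hGX : G ++ X ∈ M.pred) :
    X = [] := by
  by_contra hX
  exact M.prefixFree G hG X hX hGX

theorem eq_and_eq_of_append_eq_append {G H X Y : List α} (hG : G ∈ M.pred) (hH : H ∈ M.pred)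
    (h : G ++ Y = H ++ X) : G = H ∧ Y = X := by
  have hGH : G = H := by
    rcases List.append_eq_append_iff.mp h with ⟨a, rfl, -⟩ | ⟨c, rfl, -⟩
    · simp [M.eq_nil_of_append_mem_pred hG hH]
    · simp [M.eq_nil_of_append_mem_pred hH hG]
  subst hGH
  exact ⟨rfl, List.append_cancel_left h⟩

theorem sat_append_iff {H : List α} (hH : H ∈ M.pred) (X : List α) :
    M.Sat (H ++ X) ↔ X ∈ M.phi H := by
  constructor
  · rintro ⟨G, hG, Y, hY, h⟩
    obtain ⟨rfl, rfl⟩ := M.eq_and_eq_of_append_eq_append hG hH h.symm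
    exact hY
  · exact fun hX => ⟨H, hH, X, hX, rfl⟩

theorem append_mem_sentPlus {H X : List α} (hH : H ∈ M.pred) (hX : X ≠ []) :
    H ++ X ∈ M.sentPlus :=
  ⟨⟨H, hH, X, rfl⟩, M.prefixFree H hH X hX⟩

theorem IsRModel.sat_cons_append_iff {M : SmullyanModel α} {r : α} (hr : M.IsRModel r)
    {H K : List α} (hH : H ∈ M.pred) (hK : K ∈ M.pred) :
    M.Sat ((r :: H) ++ K) ↔ M.Sat (H ++ (K ++ K)) := by
  obtain ⟨hrH, hphi⟩ := hr H hH
  rw [M.sat_append_iff hrH, M.sat_append_iff hH, hphi]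
  exact and_iff_right hK

end SmullyanModel

theorem stmt_2_general {α : Type} (M : SmullyanModel α) (r : α)
    (hr : M.IsRModel r) (H : List α) (hH : H ∈ M.pred) :
    M.IsFixedPoint H ((r :: H) ++ (r :: H)) := by
  have hrH : r :: H ∈ M.pred := (hr H hH).1
  exact ⟨M.append_mem_sentPlus hrH (List.cons_ne_nil r H), hr.sat_cons_append_iff hH hrH⟩

/-- Smullyan's Theorem F: in an `r`-Smullyan model, every predicate `H` has a fixed
point; in fact `rHrH` is an `M`-fixed point of `H`. -/
theorem stmt_2 {α : Type} [Nonempty α] (M : SmullyanModel α) (r : α)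
    (hr : M.IsRModel r) (H : List α) (hH : H ∈ M.pred) :
    M.IsFixedPoint H ((r :: H) ++ (r :: H)) :=
  stmt_2_general M r hr H hH
end

section
/- Tarski's Undefinability Theorem for nr-Smullyan models (Smullyan's Theorem T): For any nr-Smullyan model M, there is no M-predicate H with Φ(H) = True_M. -/
namespace SmullyanModel

variable {α : Type} {M : SmullyanModel α}

theorem eq_of_append_eq_append {H H' X X' : List α} (hH : H ∈ M.pred) (hH' : H' ∈ M.pred)
    (h : H ++ X = H' ++ X') : H = H' := by
  rcases List.prefix_or_prefix_of_prefix ⟨X, h⟩ (List.prefix_append H' X') with ⟨Y, rfl⟩ | ⟨Y, rfl⟩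
  · by_contra hne
    exact M.prefixFree H hH Y (by rintro rfl; simp at hne) hH'
  · by_contra hne
    exact M.prefixFree H' hH' Y (by rintro rfl; simp at hne) hH

theorem append_mem_trueSet_iff {H X : List α} (hH : H ∈ M.pred) :
    H ++ X ∈ M.trueSet ↔ X ∈ M.phi H := by
  constructor
  · rintro ⟨H', hH', X', hX', hEq⟩
    obtain rfl := eq_of_append_eq_append hH hH' hEq
    rwa [List.append_cancel_left hEq]
  · exact fun hX => ⟨H, hH, X, hX, rfl⟩

/-- In an `nr`-model, `rnH` names the strings `K` whose diagonalisation `KK` is not named by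
`H`; its own diagonalisation is therefore true exactly when `H` does not name it. -/
theorem diagonal_mem_trueSet_iff {n r : α} (hn : M.IsNModel n) (hr : M.IsRModel r)
    {H : List α} (hH : H ∈ M.pred) :
    r :: n :: H ++ r :: n :: H ∈ M.trueSet ↔ r :: n :: H ++ r :: n :: H ∉ M.phi H := by
  obtain ⟨hnH, hphi_nH⟩ := hn H hH
  obtain ⟨hrnH, hphi_rnH⟩ := hr (n :: H) hnH
  rw [append_mem_trueSet_iff hrnH, hphi_rnH, hphi_nH]
  simp only [Set.mem_ofPred_eq, hrnH, true_and]

end SmullyanModel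

theorem stmt_3_general {α : Type} (M : SmullyanModel α) (n r : α)
    (hn : M.IsNModel n) (hr : M.IsRModel r) :
    ¬ ∃ H ∈ M.pred, M.phi H = M.trueSet := by
  rintro ⟨H, hH, hphi⟩
  have hdiag := SmullyanModel.diagonal_mem_trueSet_iff hn hr hH
  rw [hphi] at hdiag
  exact iff_not_self hdiag

/-- Smullyan's Theorem T: for any `nr`-Smullyan model `M`, no `M`-predicate names `True_M`. -/
theorem stmt_3 {α : Type} [Nonempty α] (M : SmullyanModel α) (n r : α)
    (hn : M.IsNModel n) (hr : M.IsRModel r) :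
    ¬ ∃ H ∈ M.pred, M.phi H = M.trueSet :=
  stmt_3_general M n r hn hr
end

section
/- For any n-Smullyan model M, the property F-Tarski+ (there is no M-predicate H such that False_M^+ = Φ(H) ∩ Sent_M^+) is equivalent to the property T-Tarski+ (there is no M-predicate H such that True_M^+ = Φ(H) ∩ Sent_M^+). -/
namespace SmullyanModel

variable {α : Type} (M : SmullyanModel α)

theorem truePlus_subset_sentPlus : M.truePlus ⊆ M.sentPlus := by
  rintro S ⟨⟨H, hH, X, -, rfl⟩, hS⟩
  exact ⟨⟨H, hH, X, rfl⟩, hS⟩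

theorem phi_cons_eq_compl {n : α} (hn : M.IsNModel n) {H : List α} (hH : H ∈ M.pred) :
    M.phi (n :: H) = (M.phi H)ᶜ :=
  (hn H hH).2

/-- Inside `Sent_M⁺`, `False_M⁺` is the complement of `True_M⁺`, so a set names one
exactly when its complement names the other. -/
theorem falsePlus_eq_iff_truePlus_eq {A B : Set (List α)} (hAB : A = Bᶜ) :
    M.falsePlus = A ∩ M.sentPlus ↔ M.truePlus = B ∩ M.sentPlus := by
  have hsub := M.truePlus_subset_sentPlus
  subst hAB
  simp only [falsePlus, Set.ext_iff, Set.mem_sdiff, Set.mem_inter_iff, Set.mem_compl_iff]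
  constructor <;> intro h S <;> specialize h S <;> have := @hsub S <;> tauto

end SmullyanModel

theorem stmt_8_general {α : Type} (M : SmullyanModel α) (n : α)
    (hn : M.IsNModel n) :
    M.FTarskiPlus ↔ M.TTarskiPlus := by
  constructor
  · rintro hF ⟨H, hH, hT⟩
    exact hF ⟨n :: H, (hn H hH).1,
      (M.falsePlus_eq_iff_truePlus_eq (M.phi_cons_eq_compl hn hH)).2 hT⟩
  · rintro hT ⟨H, hH, hF⟩
    have hcompl : M.phi H = (M.phi (n :: H))ᶜ := by
      rw [M.phi_cons_eq_compl hn hH, compl_compl]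
    exact hT ⟨n :: H, (hn H hH).1, (M.falsePlus_eq_iff_truePlus_eq hcompl).1 hF⟩

/-- F-Tarski⁺ and T-Tarski⁺ are equivalent for any `n`-Smullyan model. -/
theorem stmt_8 {α : Type} [Nonempty α] (M : SmullyanModel α) (n : α)
    (hn : M.IsNModel n) :
    M.FTarskiPlus ↔ M.TTarskiPlus :=
  stmt_8_general M n hn
end

section
/- There exists a Smullyan model which satisfies T-Tarski+ (there is no M-predicate H such that True_M^+ = Φ(H) ∩ Sent_M^+) but does not satisfy F-Tarski (there is no M-predicate H with Φ(H) = False_M). Concretely, the simple model with Σ = {♯} and Φ(♯) = {♯^{2i+1} : i ∈ ℕ} is such a model. -/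
namespace SmullyanModel

variable {α : Type} (M : SmullyanModel α)

/-!
In the simple model over `Σ = {♯}` the only predicate is `♯`, so the true sentences are the
strings `♯X` with `X` of odd length, i.e. the nonempty strings of even length. Hence the false
sentences are exactly the strings of odd length, which is the set `♯` names, and F-Tarski fails.
T-Tarski⁺ holds because `♯♯` is true but not named by `♯`.
-/

def singlePred {α : Type} (P : List α) (A : Set (List α)) : SmullyanModel α where
  pred := {P}
  prefixFree := by
    rintro H rfl X hX hPX
    exact hX (List.append_right_eq_self.mp hPX)
  phi _ := A

section singlePred

variable {α : Type} (P : List α) (A : Set (List α))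

theorem sent_singlePred : (singlePred P A).sent = Set.range (P ++ ·) := by
  ext S
  simp [sent, singlePred, eq_comm]

theorem trueSet_singlePred : (singlePred P A).trueSet = (P ++ ·) '' A := by
  ext S
  simp [trueSet, singlePred, eq_comm]

theorem falseSet_singlePred : (singlePred P A).falseSet = (P ++ ·) '' Aᶜ := by
  rw [falseSet, sent_singlePred, trueSet_singlePred, ← Set.image_univ,
    ← Set.image_sdiff (List.append_right_injective P), Set.compl_eq_univ_sdiff]

end singlePred

theorem simplePred_of_subsingleton {α : Type} [Subsingleton α] (a : α) :
    simplePred a = {[a]} := by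
  ext L
  constructor
  · rintro ⟨X, haX, rfl⟩
    cases X with
    | nil => rfl
    | cons b _ => exact absurd (Subsingleton.elim a b ▸ List.mem_cons_self) haX
  · rintro rfl
    exact ⟨[], List.not_mem_nil, rfl⟩

abbrev oddUnit : SmullyanModel Unit := singlePred [()] {L | Odd L.length}

theorem phi_oddUnit :
    oddUnit.phi [()] = {L : List Unit | ∃ i : ℕ, L = List.replicate (2 * i + 1) ()} := by
  ext L
  simp [singlePred, List.eq_replicate_iff, Odd]

theorem falseSet_oddUnit : oddUnit.falseSet = {L | Odd L.length} := by
  rw [falseSet_singlePred]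
  ext L
  constructor
  · rintro ⟨X, hX, rfl⟩
    simpa [Nat.odd_add_one] using hX
  · intro hL
    obtain ⟨_, X, rfl⟩ := List.exists_cons_of_length_pos hL.pos
    exact ⟨X, by simpa [Nat.odd_add_one] using hL, rfl⟩

theorem tTarskiPlus_oddUnit : oddUnit.TTarskiPlus := by
  rintro ⟨H, rfl, hH⟩
  have hTrue : [(), ()] ∈ oddUnit.truePlus := by
    refine ⟨?_, by simp [singlePred]⟩
    rw [trueSet_singlePred]
    exact ⟨[()], by simp, rfl⟩
  rw [hH] at hTrue
  exact absurd hTrue.1 (by simp [singlePred])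

end SmullyanModel

/-- There is a simple model (Σ = {♯}, Φ(♯) = {♯^(2i+1) : i ∈ ℕ}) satisfying
T-Tarski⁺ but not F-Tarski. -/
theorem stmt_14 :
    ∃ M : SmullyanModel Unit,
      M.pred = SmullyanModel.simplePred () ∧
      M.phi [()] = {L : List Unit | ∃ i : ℕ, L = List.replicate (2 * i + 1) ()} ∧
      M.TTarskiPlus ∧
      ¬ M.FTarski :=
  ⟨SmullyanModel.oddUnit, (SmullyanModel.simplePred_of_subsingleton ()).symm,
    SmullyanModel.phi_oddUnit, SmullyanModel.tTarskiPlus_oddUnit,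
    fun hF => hF ⟨[()], rfl, SmullyanModel.falseSet_oddUnit.symm⟩⟩
end

section
/- There exists a Smullyan model which satisfies T-Tarski+ (there is no M-predicate H such that True_M^+ = Φ(H) ∩ Sent_M^+) and F-Tarski (there is no M-predicate H with Φ(H) = False_M) but does not satisfy F-Tarski+ (there is no M-predicate H such that False_M^+ = Φ(H) ∩ Sent_M^+). Concretely, the simple model with Σ = {♯} and Φ(♯) = {♯^{2i} : i ∈ ℕ} is such a model. -/
/-!
In the model, `♯` is the only predicate, so the sentences are the nonempty strings `♯ⁿ` and
`♯ⁿ` is true iff `n - 1` is even, i.e. iff `n` is odd. `Φ(♯)` contains the non-sentence `ε`, so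
it is not `False_M`; it misses the true sentence `♯³`, so it does not name `True_M⁺`; but on
`Sent_M⁺` (the strings of length at least two) it picks out exactly the false ones.
-/

namespace SmullyanModel

def evenStrings : Set (List Unit) := {L | ∃ i : ℕ, L = List.replicate (2 * i) ()}

lemma mem_evenStrings {L : List Unit} : L ∈ evenStrings ↔ Even L.length := by
  constructor
  · rintro ⟨i, rfl⟩
    simp
  · rintro ⟨k, hk⟩
    exact ⟨k, List.length_injective (by simp [hk]; omega)⟩

lemma simplePred_unit : simplePred () = {[()]} := by
  ext L
  constructor
  · rintro ⟨X, hX, rfl⟩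
    cases X with
    | nil => rfl
    | cons a t => exact absurd (List.mem_cons_self ..) hX
  · rintro rfl
    exact ⟨[], List.not_mem_nil, rfl⟩

/-- `Φ` is taken constant; only its value at the sole predicate `♯` matters. -/
def parityModel : SmullyanModel Unit where
  pred := {[()]}
  prefixFree := by
    rintro H rfl X hX h
    exact hX (List.length_eq_zero_iff.mp (by simpa using congrArg List.length h))
  phi _ := evenStrings

lemma phi_parityModel (H : List Unit) : parityModel.phi H = evenStrings := rfl

lemma mem_pred_parityModel {L : List Unit} : L ∈ parityModel.pred ↔ L.length = 1 :=
  Set.mem_singleton_iff.trans List.length_injective.eq_iff.symm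

lemma mem_sent_parityModel {L : List Unit} : L ∈ parityModel.sent ↔ 0 < L.length := by
  constructor
  · rintro ⟨H, hH, X, rfl⟩
    simp [mem_pred_parityModel.mp hH]
  · intro hL
    obtain ⟨_, t, rfl⟩ := List.exists_cons_of_length_pos hL
    exact ⟨[()], rfl, t, rfl⟩

lemma mem_trueSet_parityModel {L : List Unit} : L ∈ parityModel.trueSet ↔ Odd L.length := by
  constructor
  · rintro ⟨H, hH, X, hX, rfl⟩
    rw [List.length_append, mem_pred_parityModel.mp hH, add_comm]
    exact (mem_evenStrings.mp hX).add_one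
  · rintro ⟨k, hk⟩
    exact ⟨[()], rfl, List.replicate (2 * k) (), ⟨k, rfl⟩,
      List.length_injective (by simp [hk])⟩

lemma mem_sentPlus_parityModel {L : List Unit} : L ∈ parityModel.sentPlus ↔ 1 < L.length := by
  rw [sentPlus, Set.mem_sdiff, mem_sent_parityModel, mem_pred_parityModel]
  omega

lemma mem_truePlus_parityModel {L : List Unit} :
    L ∈ parityModel.truePlus ↔ Odd L.length ∧ 1 < L.length := by
  rw [truePlus, Set.mem_sdiff, mem_trueSet_parityModel, mem_pred_parityModel]
  constructor
  · rintro ⟨hodd, hne⟩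
    exact ⟨hodd, by obtain ⟨k, hk⟩ := hodd; omega⟩
  · rintro ⟨hodd, hlt⟩
    exact ⟨hodd, hlt.ne'⟩

lemma falsePlus_parityModel :
    parityModel.falsePlus = parityModel.phi [()] ∩ parityModel.sentPlus := by
  ext L
  simp only [falsePlus, Set.mem_sdiff, Set.mem_inter_iff, mem_sentPlus_parityModel,
    mem_truePlus_parityModel, phi_parityModel, mem_evenStrings, ← Nat.not_odd_iff_even]
  tauto

lemma tTarskiPlus_parityModel : parityModel.TTarskiPlus := by
  rintro ⟨H, -, hH⟩
  have htrue : List.replicate 3 () ∈ parityModel.truePlus :=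
    mem_truePlus_parityModel.mpr ⟨by decide, by decide⟩
  rw [hH] at htrue
  exact absurd (mem_evenStrings.mp htrue.1) (by decide)

lemma fTarski_parityModel : parityModel.FTarski := by
  rintro ⟨H, -, hH⟩
  have hnil : ([] : List Unit) ∈ parityModel.phi H := ⟨0, rfl⟩
  rw [hH] at hnil
  exact absurd (mem_sent_parityModel.mp hnil.1) (lt_irrefl 0)

lemma not_fTarskiPlus_parityModel : ¬ parityModel.FTarskiPlus :=
  fun h => h ⟨[()], rfl, falsePlus_parityModel⟩

end SmullyanModel

/-- There is a simple model (Σ = {♯}, Φ(♯) = {♯^(2i) : i ∈ ℕ}) satisfying T-Tarski⁺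
and F-Tarski but not F-Tarski⁺. -/
theorem stmt_17 :
    ∃ M : SmullyanModel Unit,
      M.pred = SmullyanModel.simplePred () ∧
      M.phi [()] = {L : List Unit | ∃ i : ℕ, L = List.replicate (2 * i) ()} ∧
      M.TTarskiPlus ∧
      M.FTarski ∧
      ¬ M.FTarskiPlus :=
  open SmullyanModel in
  ⟨parityModel, simplePred_unit.symm, rfl, tTarskiPlus_parityModel, fTarski_parityModel,
    not_fTarskiPlus_parityModel⟩
end
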